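/- arXiv:1408.1849 — 5 statements merged into one kernel-verified Lean document; each statement's English description precedes it below -/
import Mathlib

section
/- Let X ∼ CO(μ; q). Then: (a) the support S of X is an integer chain, i.e., if j₁, j₂ ∈ S and j ∈ ℤ with j₁ ≤ j ≤ j₂, then j ∈ S; (b) q(j) > 0 for every j ∈ S^∘; (c) q̲(j) := q(j) + j − μ > 0 for every j ∈ S_∘. -/
open scoped Classical

noncomputable section

/-- `p` is a probability mass function on `ℤ`. -/
def IsPMF (p : ℤ → ℝ) : Prop := (∀ j, 0 ≤ p j) ∧ HasSum p 1

/-- The support `S(X) = {j : p j > 0}` of a pmf. -/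
def supp (p : ℤ → ℝ) : Set ℤ := {j | 0 < p j}

/-- The cumulative sum `∑_{k ≤ j} (μ - k) p k`. -/
def cumul (p : ℤ → ℝ) (μ : ℝ) (j : ℤ) : ℝ :=
  ∑' k : {k : ℤ // k ≤ j}, (μ - (k.1 : ℝ)) * p k.1

/-- Expectation `E h(X) = ∑_j h j * p j`. -/
def Ex (p h : ℤ → ℝ) : ℝ := ∑' j : ℤ, h j * p j

/-- `E |X|^r < ∞`. -/
def FinAbsMoment (p : ℤ → ℝ) (r : ℕ) : Prop :=
  Summable (fun j : ℤ => |(j : ℝ)| ^ r * p j)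

/-- `X ∼ CO(μ; q)` for a general weight `q : ℤ → ℝ`:
`p` is a pmf with finite mean `μ` satisfying `∑_{k ≤ j}(μ-k)p k = q j * p j` for all `j`. -/
def COf (p : ℤ → ℝ) (μ : ℝ) (q : ℤ → ℝ) : Prop :=
  IsPMF p ∧ Summable (fun j : ℤ => |(j : ℝ)| * p j) ∧
    (∑' j : ℤ, (j : ℝ) * p j) = μ ∧ ∀ j : ℤ, cumul p μ j = q j * p j

/-- The real quadratic `δ x² + β x + γ`. -/
def quadR (δ β γ : ℝ) (x : ℝ) : ℝ := δ * x ^ 2 + β * x + γ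

/-- The quadratic on the integers. -/
def quad (δ β γ : ℝ) (j : ℤ) : ℝ := quadR δ β γ (j : ℝ)

/-- `X ∼ CO(μ; δ, β, γ)`, the cumulative Ord family. -/
def CO (p : ℤ → ℝ) (μ δ β γ : ℝ) : Prop := COf p μ (quad δ β γ)

/-- The `k`-th ascending power `f^{[k]}(j) = f(j) f(j+1) ⋯ f(j+k-1)`. -/
def ascPow (q : ℤ → ℝ) (k : ℕ) (j : ℤ) : ℝ := ∏ t ∈ Finset.range k, q (j + (t : ℤ))

/-- Forward difference `Δ f (j) = f (j+1) - f j`. -/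
def fwd (f : ℤ → ℝ) (j : ℤ) : ℝ := f (j + 1) - f j

/-- Iterated forward difference `Δ^k`. -/
def fwdIter (k : ℕ) (f : ℤ → ℝ) : ℤ → ℝ := fwd^[k] f

/-- Descending factorial `(x)_r = x (x-1) ⋯ (x-r+1)`. -/
def dFact (x : ℝ) (r : ℕ) : ℝ := ∏ t ∈ Finset.range r, (x - (t : ℝ))

/-- Ascending factorial `[x]_k = x (x+1) ⋯ (x+k-1)`. -/
def aFact (x : ℝ) (k : ℕ) : ℝ := ∏ t ∈ Finset.range k, (x + (t : ℝ))

/-- `m ≤ M(X) = |S(X)| - 1`, i.e. the support has at least `m+1` points. -/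
def SuppAtLeast (p : ℤ → ℝ) (m : ℕ) : Prop :=
  ∃ T : Finset ℤ, T.card = m + 1 ∧ ↑T ⊆ supp p

/-- Rodrigues polynomial `P_k(j) = (-1)^k Δ^k [q^{[k]}(j-k) p(j-k)] / p(j)`. -/
def RodP (p q : ℤ → ℝ) (k : ℕ) (j : ℤ) : ℝ :=
  ((-1 : ℝ) ^ k * fwdIter k (fun x => ascPow q k (x - (k : ℤ)) * p (x - (k : ℤ))) j) / p j

/-- `c_k(δ) = ∏_{j=k-1}^{2k-2} (1 - jδ)`. -/
def ckc (δ : ℝ) (k : ℕ) : ℝ := ∏ t ∈ Finset.range k, (1 - ((k - 1 + t : ℕ) : ℝ) * δ)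

/-- `A_k(μ; q) = E q^{[k]}(X)`. -/
def Ak (p q : ℤ → ℝ) (k : ℕ) : ℝ := Ex p (ascPow q k)

/-- The standardized Rodrigues polynomial `φ_k = P_k / (k! c_k(δ) A_k)^{1/2}`. -/
def phi (p q : ℤ → ℝ) (δ : ℝ) (k : ℕ) (j : ℤ) : ℝ :=
  RodP p q k j / Real.sqrt ((k.factorial : ℝ) * ckc δ k * Ak p q k)

/-- The pmf `p_i(j) = q^{[i]}(j) p(j) / E q^{[i]}(X)` of `X_i`. -/
def pmfI (p q : ℤ → ℝ) (i : ℕ) (j : ℤ) : ℝ := ascPow q i j * p j / Ak p q i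

/-- `μ_i = (δ i² + β i + μ)/(1 - 2iδ)`. -/
def muI (μ δ β : ℝ) (i : ℕ) : ℝ := (δ * (i : ℝ) ^ 2 + β * i + μ) / (1 - 2 * i * δ)

/-- `q_i(j) = q(j + i)/(1 - 2iδ)`. -/
def qI (δ β γ : ℝ) (i : ℕ) (j : ℤ) : ℝ :=
  quad δ β γ (j + (i : ℤ)) / (1 - 2 * (i : ℝ) * δ)

/-- `δ_i = δ/(1 - 2iδ)`, the leading coefficient of `q_i`. -/
def deltaI (δ : ℝ) (i : ℕ) : ℝ := δ / (1 - 2 * (i : ℝ) * δ)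

/-- Variance of `g(X)`. -/
def varOf (p g : ℤ → ℝ) : ℝ := Ex p (fun j => g j ^ 2) - (Ex p g) ^ 2

/-- `b_{j;k} = ∑_{i ≥ j} [j-i]_k a_i`. -/
def bSeq (a : ℤ → ℝ) (k : ℕ) (j : ℤ) : ℝ :=
  ∑' i : {i : ℤ // j ≤ i}, aFact ((j : ℝ) - (i.1 : ℝ)) k * a i.1

/-- Membership in the class `ℋ^{m,n}(X)`. -/
def inH (p q g : ℤ → ℝ) (m n : ℕ) : Prop :=
  Summable (fun j : ℤ => ascPow q n j * fwdIter n g j ^ 2 * p j) ∧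
  Summable (fun j : ℤ => ascPow q m j * |fwdIter m g j| * p j)

/-- The constant `κ_i`. -/
def kappa (p : ℤ → ℝ) (δ β γ : ℝ) (m n i : ℕ) : ℝ :=
  (m.choose i : ℝ) * (∏ t ∈ Finset.range n, (1 - ((m + i + t : ℕ) : ℝ) * δ)) /
    (dFact ((m : ℝ) + n) i * Ak p (quad δ β γ) i * ckc δ i *
      ∏ t ∈ Finset.range n, (1 - ((m + t : ℕ) : ℝ) * δ))

/-- The constant `ν_i`. -/
def nuC (δ : ℝ) (m n i : ℕ) : ℝ :=
  (n.choose i : ℝ) /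
    (dFact ((m : ℝ) + n) i * ∏ t ∈ Finset.range i, (1 - ((m + t : ℕ) : ℝ) * δ))

/-- The variance bound `S_{m,n}(g)`. -/
def Smn (p : ℤ → ℝ) (δ β γ : ℝ) (g : ℤ → ℝ) (m n : ℕ) : ℝ :=
  (∑ i ∈ Finset.Icc 1 m, kappa p δ β γ m n i *
      Ex p (fun j => ascPow (quad δ β γ) i j * fwdIter i g j) ^ 2) +
  ∑ i ∈ Finset.Icc 1 n, (-1 : ℝ) ^ (i - 1) * nuC δ m n i *
      Ex p (fun j => ascPow (quad δ β γ) i j * fwdIter i g j ^ 2)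

/-- `M(X)` when the support is finite. -/
def Mnum (p : ℤ → ℝ) : ℕ := (supp p).ncard - 1

/-- The constant `ζ_{m₁,m₂,n}`. -/
def zeta (p : ℤ → ℝ) (δ : ℝ) (m₁ m₂ n : ℕ) : ℝ :=
  if (supp p).Finite then
    (dFact ((m₂ : ℝ) + n) n * dFact ((Mnum p : ℝ) - m₁ - 1) n *
        (∏ t ∈ Finset.range n, (1 - ((m₂ + t : ℕ) : ℝ) * δ)) *
        ∏ t ∈ Finset.range n, (1 - ((m₁ + Mnum p + t : ℕ) : ℝ) * δ)) /
      (dFact ((m₁ : ℝ) + n) n * dFact ((Mnum p : ℝ) - m₂ - 1) n *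
        (∏ t ∈ Finset.range n, (1 - ((m₁ + t : ℕ) : ℝ) * δ)) *
        ∏ t ∈ Finset.range n, (1 - ((m₂ + Mnum p + t : ℕ) : ℝ) * δ))
  else
    (dFact ((m₂ : ℝ) + n) n * ∏ t ∈ Finset.range n, (1 - ((m₂ + t : ℕ) : ℝ) * δ)) /
      (dFact ((m₁ : ℝ) + n) n * ∏ t ∈ Finset.range n, (1 - ((m₁ + t : ℕ) : ℝ) * δ))

/-!
Since the centred terms `(μ - k) p k` sum to zero, the partial sum `cumul p μ j` is positive
whenever `j` lies weakly above one support point and strictly below another: for `j < μ` it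
dominates the positive term at the lower point, and for `μ ≤ j` it equals `∑_{k > j} (k - μ) p k`,
which contains the positive term at the upper point. The identity `cumul p μ j = q j * p j` then
forces `p j > 0` and `q j > 0`, and `cumul p μ (j - 1) = (q j + j - μ) * p j` gives the last part.
-/

namespace COf

variable {p q : ℤ → ℝ} {μ : ℝ}

lemma summable_coe_mul (h : COf p μ q) : Summable fun k : ℤ => (k : ℝ) * p k := by
  obtain ⟨⟨hp0, -⟩, habs, -, -⟩ := h
  refine Summable.of_abs (habs.congr fun k => ?_)
  rw [abs_mul, abs_of_nonneg (hp0 k)]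

lemma summable_centered (h : COf p μ q) : Summable fun k : ℤ => (μ - k) * p k := by
  simpa only [sub_mul] using (h.1.2.summable.mul_left μ).sub h.summable_coe_mul

lemma tsum_centered (h : COf p μ q) : ∑' k : ℤ, (μ - k) * p k = 0 := by
  obtain ⟨⟨-, hp1⟩, -, hmean, -⟩ := id h
  simp_rw [sub_mul]
  rw [(hp1.summable.mul_left μ).tsum_sub h.summable_coe_mul, tsum_mul_left, hp1.tsum_eq, hmean]
  ring

lemma cumul_pos_of_lt_mean {a j : ℤ} (h : COf p μ q) (ha : a ∈ supp p) (haj : a ≤ j)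
    (hj : (j : ℝ) < μ) : 0 < cumul p μ j := by
  have haj' : (a : ℝ) ≤ j := by exact_mod_cast haj
  calc 0 < (μ - a) * p a := mul_pos (by linarith) ha
    _ ≤ cumul p μ j := by
      refine (h.summable_centered.subtype _).le_tsum ⟨a, haj⟩ fun k _ => ?_
      have hk : (k.1 : ℝ) ≤ j := by exact_mod_cast k.2
      exact mul_nonneg (by linarith) (h.1.1 k)

lemma cumul_pos_of_mean_le {b j : ℤ} (h : COf p μ q) (hb : b ∈ supp p) (hjb : j < b)
    (hj : μ ≤ j) : 0 < cumul p μ j := by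
  have hjb' : (j : ℝ) < b := by exact_mod_cast hjb
  have hsplit := h.summable_centered.tsum_subtype_add_tsum_subtype_compl {k | k ≤ j}
  calc 0 < -((μ - b) * p b) := by nlinarith [show (0 : ℝ) < p b from hb]
    _ ≤ -∑' k : ↥{k : ℤ | k ≤ j}ᶜ, (μ - k) * p k := by
      rw [← tsum_neg]
      refine (h.summable_centered.subtype _).neg.le_tsum ⟨b, not_le.mpr hjb⟩ fun k _ => ?_
      have hk : (j : ℝ) < k.1 := by exact_mod_cast not_le.mp (show ¬k.1 ≤ j from k.2)
      exact neg_nonneg.mpr (mul_nonpos_of_nonpos_of_nonneg (by linarith) (h.1.1 k))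
    _ = cumul p μ j := by
      rw [h.tsum_centered] at hsplit
      exact (eq_neg_of_add_eq_zero_left hsplit).symm

lemma cumul_pos {a b j : ℤ} (h : COf p μ q) (ha : a ∈ supp p) (hb : b ∈ supp p)
    (haj : a ≤ j) (hjb : j < b) : 0 < cumul p μ j := by
  rcases lt_or_ge (j : ℝ) μ with hj | hj
  · exact h.cumul_pos_of_lt_mean ha haj hj
  · exact h.cumul_pos_of_mean_le hb hjb hj

lemma pos_of_cumul_pos {j : ℤ} (h : COf p μ q) (hc : 0 < cumul p μ j) :
    0 < q j ∧ j ∈ supp p := by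
  rw [h.2.2.2 j] at hc
  have hqj : 0 < q j := pos_of_mul_pos_left hc (h.1.1 j)
  exact ⟨hqj, pos_of_mul_pos_right hc hqj.le⟩

lemma cumul_sub_one (h : COf p μ q) (j : ℤ) : cumul p μ (j - 1) = (q j + j - μ) * p j := by
  have hset : {k : ℤ | k ≤ j} = {k | k ≤ j - 1} ∪ {j} := by
    ext k; simp only [Set.mem_ofPred_eq, Set.mem_union, Set.mem_singleton_iff]; omega
  have hdisj : Disjoint {k : ℤ | k ≤ j - 1} {j} :=
    Set.disjoint_singleton_right.mpr (by simp)
  have hsucc : cumul p μ j = cumul p μ (j - 1) + (μ - j) * p j := by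
    calc cumul p μ j = ∑' k : ↥{k : ℤ | k ≤ j}, (μ - k) * p k := rfl
      _ = ∑' k : ↥({k : ℤ | k ≤ j - 1} ∪ {j}), (μ - k) * p k := by rw [hset]
      _ = cumul p μ (j - 1) + (μ - j) * p j := by
        rw [Summable.tsum_union_disjoint hdisj (h.summable_centered.subtype _)
          (h.summable_centered.subtype _),
          tsum_singleton j fun k : ℤ => (μ - k) * p k]
        rfl
  linear_combination h.2.2.2 j - hsucc

end COf

theorem stmt0 (p : ℤ → ℝ) (μ δ β γ : ℝ) (h : CO p μ δ β γ) :
    (∀ j₁ j₂ j : ℤ, j₁ ∈ supp p → j₂ ∈ supp p → j₁ ≤ j → j ≤ j₂ → j ∈ supp p) ∧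
    (∀ j ∈ supp p, (∃ i ∈ supp p, j < i) → 0 < quad δ β γ j) ∧
    (∀ j ∈ supp p, (∃ i ∈ supp p, i < j) → 0 < quad δ β γ j + (j : ℝ) - μ) := by
  have hCO : COf p μ (quad δ β γ) := h
  refine ⟨fun j₁ j₂ j h₁ h₂ h₁j hj₂ => ?_, fun j hj ⟨i, hi, hji⟩ => ?_,
    fun j hj ⟨i, hi, hij⟩ => ?_⟩
  · rcases hj₂.eq_or_lt with rfl | hlt
    · exact h₂
    · exact (hCO.pos_of_cumul_pos (hCO.cumul_pos h₁ h₂ h₁j hlt)).2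
  · exact (hCO.pos_of_cumul_pos (hCO.cumul_pos hj hi le_rfl hji)).1
  · have hc := hCO.cumul_pos hi hj (Int.le_sub_one_of_lt hij) (sub_one_lt j)
    rw [hCO.cumul_sub_one] at hc
    exact pos_of_mul_pos_left hc (hCO.1.1 j)
end
end

section
/- Suppose a discrete random variable X with pmf p is supported on an infinite integer chain S(X), has finite mean, and satisfies ∑_{k ≤ j} (c − k) p(k) = q(j) p(j) for all j ∈ S(X), where c ∈ ℝ is a constant and q is a real polynomial of degree at most two. If S(X) is unbounded above, then q(j)p(j) → 0 as j → +∞; if S(X) is unbounded below, then q(j)p(j) → 0 as j → −∞. -/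
/-! The cumulative sums `F j = ∑_{k ≤ j} (c - k) p(k)` tend to `0` as `j → -∞` and to
`∑_k (c - k) p(k)` as `j → +∞`, and `|q(j) p(j)| ≤ |F j|` everywhere (with equality on the
support, while `p j = 0` off it). So it only remains to see that the limit at `+∞` is `0` when
the support is unbounded above. Since the support is a chain, `F j = q(j) p(j)` for all large
`j`, and `|q(j) p(j)| ≤ C j² p(j)`. Finally `∑ j p(j) < ∞` forces `j² p(j) < ε` for infinitely
many `j`: otherwise `j p(j) ≥ ε / j` eventually and the harmonic series would converge. -/

open scoped Classical

noncomputable section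

open Filter Topology

section TailSums

variable {α β G : Type*}

theorem Summable.tendsto_tsum_subtype_zero [AddCommGroup G] [TopologicalSpace G]
    [IsTopologicalAddGroup G] {f : α → G} (hf : Summable f) {l : Filter β} {S : β → Set α}
    (hS : ∀ s : Finset α, ∀ᶠ b in l, Disjoint (S b) s) :
    Tendsto (fun b => ∑' x : S b, f x) l (𝓝 0) := fun e he => by
  obtain ⟨s, hs⟩ := hf.tsum_vanishing he
  exact (hS s).mono fun b hb => hs _ hb

theorem Summable.tendsto_tsum_Iic_atBot [AddCommGroup G] [TopologicalSpace G]
    [IsTopologicalAddGroup G] {f : ℤ → G} (hf : Summable f) :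
    Tendsto (fun j : ℤ => ∑' k : Set.Iic j, f k) atBot (𝓝 0) := by
  refine hf.tendsto_tsum_subtype_zero fun s => ?_
  obtain ⟨m, hm⟩ := s.finite_toSet.bddBelow
  filter_upwards [eventually_lt_atBot m] with j hj
  exact Set.disjoint_left.2 fun k hkj hks => (hkj.trans_lt hj).not_ge (hm hks)

theorem Summable.tendsto_tsum_Iic_atTop [UniformSpace G] [AddCommGroup G]
    [IsUniformAddGroup G] [CompleteSpace G] [T2Space G] {f : ℤ → G} (hf : Summable f) :
    Tendsto (fun j : ℤ => ∑' k : Set.Iic j, f k) atTop (𝓝 (∑' k, f k)) := by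
  have htail : Tendsto (fun j : ℤ => ∑' k : ↑(Set.Iic j)ᶜ, f k) atTop (𝓝 0) := by
    refine hf.tendsto_tsum_subtype_zero fun s => ?_
    obtain ⟨m, hm⟩ := s.finite_toSet.bddAbove
    filter_upwards [eventually_ge_atTop m] with j hj
    exact Set.disjoint_compl_left_iff_subset.2 fun k hks => (hm hks).trans hj
  simpa using ((tendsto_const_nhds (x := ∑' k, f k)).sub htail).congr fun j =>
    (eq_sub_of_add_eq (hf.tsum_subtype_add_tsum_subtype_compl (Set.Iic j))).symm

end TailSums

theorem Summable.frequently_natCast_mul_lt {g : ℕ → ℝ} (hg : Summable g) {ε : ℝ}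
    (hε : 0 < ε) : ∃ᶠ n : ℕ in atTop, (n : ℝ) * g n < ε := by
  by_contra h
  simp only [not_frequently, not_lt] at h
  have hinv : Summable fun n : ℕ => ε * (n : ℝ)⁻¹ := by
    refine hg.of_norm_bounded_eventually_nat ?_
    filter_upwards [h, eventually_gt_atTop 0] with n hn hn0
    have hn0' : (0 : ℝ) < n := by exact_mod_cast hn0
    rw [Real.norm_of_nonneg (by positivity), ← div_eq_mul_inv, div_le_iff₀ hn0']
    linarith
  exact Real.not_summable_natCast_inv ((summable_mul_left_iff hε.ne').1 hinv)

theorem frequently_sq_mul_lt_of_summable_abs_mul {p : ℤ → ℝ}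
    (hmean : Summable fun j : ℤ => |(j : ℝ)| * p j) {ε : ℝ} (hε : 0 < ε) :
    ∃ᶠ j : ℤ in atTop, (j : ℝ) ^ 2 * p j < ε := by
  have hnat : Summable fun n : ℕ => (n : ℝ) * p n :=
    (hmean.comp_injective Nat.cast_injective).congr fun n => by simp
  refine tendsto_natCast_atTop_atTop.frequently ((hnat.frequently_natCast_mul_lt hε).mono ?_)
  intro n hn
  simpa [sq, mul_assoc] using hn

theorem abs_quadR_le {δ β γ x : ℝ} (hx : 1 ≤ |x|) :
    |quadR δ β γ x| ≤ (|δ| + |β| + |γ|) * x ^ 2 := by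
  have hx2 : |x| ≤ x ^ 2 := by rw [← sq_abs]; nlinarith
  calc |quadR δ β γ x| ≤ |δ| * x ^ 2 + |β| * |x| + |γ| := by
        have := abs_add_three (δ * x ^ 2) (β * x) γ
        rwa [abs_mul, abs_mul, abs_of_nonneg (sq_nonneg x)] at this
    _ ≤ (|δ| + |β| + |γ|) * x ^ 2 := by
        nlinarith [abs_nonneg β, abs_nonneg γ]

section CumulativeOrd

variable {p : ℤ → ℝ} {c δ β γ : ℝ}

theorem summable_sub_mul_of_isPMF (hp : IsPMF p)
    (hmean : Summable fun j : ℤ => |(j : ℝ)| * p j) :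
    Summable fun k : ℤ => (c - k) * p k := by
  have hmul : Summable fun k : ℤ => (k : ℝ) * p k :=
    summable_abs_iff.1 <| hmean.congr fun k => by rw [abs_mul, abs_of_nonneg (hp.1 k)]
  exact ((hp.2.summable.mul_left c).sub hmul).congr fun k => by ring

theorem tendsto_cumul_atTop (hp : IsPMF p) (hmean : Summable fun j : ℤ => |(j : ℝ)| * p j) :
    Tendsto (cumul p c) atTop (𝓝 (∑' k : ℤ, (c - k) * p k)) :=
  (summable_sub_mul_of_isPMF hp hmean).tendsto_tsum_Iic_atTop

theorem tendsto_cumul_atBot (hp : IsPMF p) (hmean : Summable fun j : ℤ => |(j : ℝ)| * p j) :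
    Tendsto (cumul p c) atBot (𝓝 0) :=
  (summable_sub_mul_of_isPMF hp hmean).tendsto_tsum_Iic_atBot

theorem abs_quad_mul_le_abs_cumul (hp0 : ∀ j, 0 ≤ p j)
    (heq : ∀ j ∈ supp p, cumul p c j = quad δ β γ j * p j) (j : ℤ) :
    ‖quad δ β γ j * p j‖ ≤ |cumul p c j| := by
  by_cases hj : j ∈ supp p
  · rw [heq j hj, Real.norm_eq_abs]
  · simp [le_antisymm (not_lt.1 hj) (hp0 j)]

theorem tsum_sub_mul_eq_zero_of_unbounded_above (hp : IsPMF p)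
    (hmean : Summable fun j : ℤ => |(j : ℝ)| * p j)
    (hchain : ∀ j₁ j₂ j : ℤ, j₁ ∈ supp p → j₂ ∈ supp p → j₁ ≤ j → j ≤ j₂ →
      j ∈ supp p)
    (hub : ∀ N : ℤ, ∃ j ∈ supp p, N < j)
    (heq : ∀ j ∈ supp p, cumul p c j = quad δ β γ j * p j) :
    ∑' k : ℤ, (c - k) * p k = 0 := by
  obtain ⟨j₀, hj₀, -⟩ := hub 0
  have hcumul : ∀ᶠ j in atTop, cumul p c j = quad δ β γ j * p j := by
    filter_upwards [eventually_ge_atTop j₀] with j hj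
    obtain ⟨j₂, hj₂, hjj₂⟩ := hub j
    exact heq j (hchain j₀ j₂ j hj₀ hj₂ hj hjj₂.le)
  set C := |δ| + |β| + |γ| + 1
  have hC : 0 < C := by positivity
  have hsmall : ∀ ε > 0, |∑' k : ℤ, (c - k) * p k| ≤ ε := by
    intro ε hε
    refine le_of_tendsto_of_frequently (tendsto_cumul_atTop hp hmean).abs ?_
    have hsq := frequently_sq_mul_lt_of_summable_abs_mul hmean (div_pos hε hC)
    refine (hsq.and_eventually (hcumul.and (eventually_ge_atTop 1))).mono ?_
    rintro j ⟨hjp, hj, hj1⟩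
    have hj1' : (1 : ℝ) ≤ |(j : ℝ)| := by
      rw [abs_of_nonneg (by positivity)]; exact_mod_cast hj1
    have hquad : |quad δ β γ j| ≤ C * (j : ℝ) ^ 2 :=
      (abs_quadR_le hj1').trans (by gcongr; linarith)
    rw [hj, abs_mul, abs_of_nonneg (hp.1 j)]
    calc |quad δ β γ j| * p j ≤ C * ((j : ℝ) ^ 2 * p j) := by
          rw [← mul_assoc]; exact mul_le_mul_of_nonneg_right hquad (hp.1 j)
      _ ≤ ε := ((lt_div_iff₀' hC).1 hjp).le
  by_contra hL
  have hL' := abs_pos.2 hL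
  linarith [hsmall _ (half_pos hL')]

end CumulativeOrd

theorem stmt2_general (p : ℤ → ℝ) (hp : IsPMF p)
    (hmean : Summable (fun j : ℤ => |(j : ℝ)| * p j))
    (hchain : ∀ j₁ j₂ j : ℤ, j₁ ∈ supp p → j₂ ∈ supp p → j₁ ≤ j → j ≤ j₂ → j ∈ supp p)
    (c δ β γ : ℝ)
    (heq : ∀ j ∈ supp p, cumul p c j = quad δ β γ j * p j) :
    ((∀ N : ℤ, ∃ j ∈ supp p, N < j) →
      Filter.Tendsto (fun j : ℤ => quad δ β γ j * p j) Filter.atTop (nhds 0)) ∧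
    ((∀ N : ℤ, ∃ j ∈ supp p, j < N) →
      Filter.Tendsto (fun j : ℤ => quad δ β γ j * p j) Filter.atBot (nhds 0)) := by
  have hbound := abs_quad_mul_le_abs_cumul hp.1 heq
  refine ⟨fun hub => ?_, fun _ => ?_⟩
  · have hlim := tendsto_cumul_atTop (c := c) hp hmean
    rw [tsum_sub_mul_eq_zero_of_unbounded_above hp hmean hchain hub heq] at hlim
    exact squeeze_zero_norm hbound (by simpa using hlim.abs)
  · exact squeeze_zero_norm hbound (by simpa using (tendsto_cumul_atBot hp hmean).abs)

theorem stmt2 (p : ℤ → ℝ) (hp : IsPMF p)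
    (hmean : Summable (fun j : ℤ => |(j : ℝ)| * p j))
    (hchain : ∀ j₁ j₂ j : ℤ, j₁ ∈ supp p → j₂ ∈ supp p → j₁ ≤ j → j ≤ j₂ → j ∈ supp p)
    (hinf : (supp p).Infinite) (c δ β γ : ℝ)
    (heq : ∀ j ∈ supp p, cumul p c j = quad δ β γ j * p j) :
    ((∀ N : ℤ, ∃ j ∈ supp p, N < j) →
      Filter.Tendsto (fun j : ℤ => quad δ β γ j * p j) Filter.atTop (nhds 0)) ∧
    ((∀ N : ℤ, ∃ j ∈ supp p, j < N) →
      Filter.Tendsto (fun j : ℤ => quad δ β γ j * p j) Filter.atBot (nhds 0)) :=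
  stmt2_general p hp hmean hchain c δ β γ heq
end
end

section
/- (a) If X ∼ CO(μ; q), then the support S(X) is uniquely determined by the pair (μ; q). (b) The pair (μ; q) characterizes the distribution: if p and p̃ are pmf's with p ∼ CO(μ; q) and p̃ ∼ CO(μ; q) for the same μ ∈ ℝ and the same quadratic q, then p(j) = p̃(j) for every j ∈ ℤ. -/
open scoped Classical

noncomputable section

section AuxCO

variable {p p' q : ℤ → ℝ} {μ : ℝ}

lemma summable_kp (h : COf p μ q) : Summable (fun k : ℤ => (k : ℝ) * p k) := by
  have h1 : Summable (fun k : ℤ => |(k : ℝ) * p k|) :=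
    h.2.1.congr fun k => by rw [abs_mul, abs_of_nonneg (h.1.1 k)]
  exact summable_abs_iff.mp h1

lemma summable_f (h : COf p μ q) : Summable (fun k : ℤ => (μ - (k : ℝ)) * p k) := by
  have := (h.1.2.summable.mul_left μ).sub (summable_kp h)
  exact this.congr fun k => by ring

lemma tsum_f (h : COf p μ q) : ∑' k : ℤ, (μ - (k : ℝ)) * p k = 0 := by
  have h1 : ∑' k : ℤ, (μ * p k - (k : ℝ) * p k) = μ * 1 - μ := by
    rw [Summable.tsum_sub (h.1.2.summable.mul_left μ) (summable_kp h), tsum_mul_left,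
      h.1.2.tsum_eq, h.2.2.1]
  have h2 : ∑' k : ℤ, (μ - (k : ℝ)) * p k = ∑' k : ℤ, (μ * p k - (k : ℝ) * p k) :=
    tsum_congr fun k => by ring
  rw [h2, h1]; ring

lemma cumul_eq_ite (j : ℤ) :
    cumul p μ j = ∑' k : ℤ, if k ≤ j then (μ - (k : ℝ)) * p k else 0 := by
  have h0 : cumul p μ j
      = ∑' k : ({k : ℤ | k ≤ j} : Set ℤ), (μ - ((k : ℤ) : ℝ)) * p (k : ℤ) := rfl
  have h1 := tsum_subtype ({k : ℤ | k ≤ j}) (fun k : ℤ => (μ - (k : ℝ)) * p k)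
  refine h0.trans (h1.trans (tsum_congr fun k => ?_))
  by_cases hk : k ≤ j <;> simp [Set.indicator_apply, hk]

lemma summable_ite (h : COf p μ q) (j : ℤ) :
    Summable (fun k : ℤ => if k ≤ j then (μ - (k : ℝ)) * p k else 0) :=
  ((summable_f h).indicator {k | k ≤ j}).congr fun k => by
    by_cases hk : k ≤ j <;> simp [Set.indicator_apply, hk]

lemma summable_ite' (h : COf p μ q) (j : ℤ) :
    Summable (fun k : ℤ => if j < k then ((k : ℝ) - μ) * p k else 0) :=
  (((summable_f h).neg).indicator {k | j < k}).congr fun k => by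
    by_cases hk : j < k <;> simp [Set.indicator_apply, hk] <;> ring

lemma cumul_compl (h : COf p μ q) (j : ℤ) :
    cumul p μ j = ∑' k : ℤ, if j < k then ((k : ℝ) - μ) * p k else 0 := by
  rw [cumul_eq_ite]
  have hfe : (fun k : ℤ => if k ≤ j then (μ - (k : ℝ)) * p k else 0)
      = fun k : ℤ => (μ - (k : ℝ)) * p k + (if j < k then ((k : ℝ) - μ) * p k else 0) := by
    funext k
    by_cases hk : k ≤ j
    · rw [if_pos hk, if_neg (not_lt.mpr hk), add_zero]
    · rw [if_neg hk, if_pos (not_le.mp hk)]; ring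
  rw [hfe, Summable.tsum_add (summable_f h) (summable_ite' h j), tsum_f h, zero_add]

lemma cumul_pos (h : COf p μ q) {a b j : ℤ} (ha : 0 < p a) (hb : 0 < p b)
    (haj : a ≤ j) (hjb : j < b) : 0 < cumul p μ j := by
  rcases lt_or_ge (j : ℝ) μ with hμ | hμ
  · rw [cumul_eq_ite]
    have hterm : (0 : ℝ) < (if a ≤ j then (μ - (a : ℝ)) * p a else 0) := by
      rw [if_pos haj]
      have haj' : (a : ℝ) ≤ (j : ℝ) := by exact_mod_cast haj
      exact mul_pos (by linarith) ha
    refine hterm.trans_le (Summable.le_tsum (summable_ite h j) a fun c _ => ?_)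
    by_cases hcj : c ≤ j
    · rw [if_pos hcj]
      have : (c : ℝ) ≤ (j : ℝ) := by exact_mod_cast hcj
      exact mul_nonneg (by linarith) (h.1.1 c)
    · rw [if_neg hcj]
  · rw [cumul_compl h]
    have hterm : (0 : ℝ) < (if j < b then ((b : ℝ) - μ) * p b else 0) := by
      rw [if_pos hjb]
      have : (j : ℝ) < (b : ℝ) := by exact_mod_cast hjb
      exact mul_pos (by linarith) hb
    refine hterm.trans_le (Summable.le_tsum (summable_ite' h j) b fun c _ => ?_)
    by_cases hcj : j < c
    · rw [if_pos hcj]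
      have : (j : ℝ) < (c : ℝ) := by exact_mod_cast hcj
      exact mul_nonneg (by linarith) (h.1.1 c)
    · rw [if_neg hcj]

lemma cumul_zero_above (h : COf p μ q) (j : ℤ) (hub : ∀ k, p k ≠ 0 → k ≤ j) :
    cumul p μ j = 0 := by
  rw [cumul_compl h]
  have hz : ∀ k : ℤ, (if j < k then ((k : ℝ) - μ) * p k else 0) = 0 := by
    intro k
    by_cases hk : j < k
    · rw [if_pos hk]
      have hpk : p k = 0 := by
        by_contra hne; exact absurd (hub k hne) (not_le.mpr hk)
      rw [hpk, mul_zero]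
    · rw [if_neg hk]
  rw [tsum_congr hz, tsum_zero]

lemma cumul_at_min (L : ℤ) (hmin : ∀ k, p k ≠ 0 → L ≤ k) :
    cumul p μ L = (μ - (L : ℝ)) * p L := by
  rw [cumul_eq_ite]
  rw [tsum_eq_single L ?_, if_pos le_rfl]
  intro c hc
  by_cases hcL : c ≤ L
  · rw [if_pos hcL]
    have hpc : p c = 0 := by
      by_contra hne
      exact hc (le_antisymm hcL (hmin c hne))
    rw [hpc, mul_zero]
  · rw [if_neg hcL]

lemma cumul_step (h : COf p μ q) (j : ℤ) :
    cumul p μ (j + 1) = cumul p μ j + (μ - ((j : ℝ) + 1)) * p (j + 1) := by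
  rw [cumul_eq_ite, cumul_eq_ite]
  have hpt : ∀ k : ℤ, (if k ≤ j + 1 then (μ - (k : ℝ)) * p k else 0)
      = (if k ≤ j then (μ - (k : ℝ)) * p k else 0)
        + (if k = j + 1 then (μ - ((j : ℝ) + 1)) * p (j + 1) else 0) := by
    intro k
    by_cases h1 : k ≤ j
    · rw [if_pos (by omega), if_pos h1, if_neg (by omega), add_zero]
    · by_cases h2 : k = j + 1
      · subst h2
        rw [if_pos le_rfl, if_neg h1, if_pos rfl, zero_add]
        push_cast; ring
      · rw [if_neg (by omega), if_neg h1, if_neg h2, add_zero]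
  rw [tsum_congr hpt,
    Summable.tsum_add (summable_ite h j) ((hasSum_ite_eq (j + 1) _).summable),
    (hasSum_ite_eq (j + 1) ((μ - ((j : ℝ) + 1)) * p (j + 1))).tsum_eq]

lemma mean_lt (h : COf p μ q) (j : ℤ) (hlb : ∀ k, p k ≠ 0 → j < k) : (j : ℝ) < μ := by
  have hle : ∀ k : ℤ, ((j : ℝ) + 1) * p k ≤ (k : ℝ) * p k := by
    intro k
    by_cases hk : p k = 0
    · simp [hk]
    · have h1 : j + 1 ≤ k := by have := hlb k hk; omega
      have h2 : (j : ℝ) + 1 ≤ (k : ℝ) := by exact_mod_cast h1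
      exact mul_le_mul_of_nonneg_right h2 (h.1.1 k)
  have hts := Summable.tsum_le_tsum hle (h.1.2.summable.mul_left ((j : ℝ) + 1)) (summable_kp h)
  rw [tsum_mul_left, h.1.2.tsum_eq, h.2.2.1, mul_one] at hts
  linarith

lemma mean_le' (h : COf p μ q) (j : ℤ) (hub : ∀ k, p k ≠ 0 → k ≤ j) : μ ≤ (j : ℝ) := by
  have hle : ∀ k : ℤ, (k : ℝ) * p k ≤ (j : ℝ) * p k := by
    intro k
    by_cases hk : p k = 0
    · simp [hk]
    · have h2 : (k : ℝ) ≤ (j : ℝ) := by exact_mod_cast hub k hk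
      exact mul_le_mul_of_nonneg_right h2 (h.1.1 k)
  have hts := Summable.tsum_le_tsum hle (summable_kp h) (h.1.2.summable.mul_left ((j : ℝ)))
  rw [tsum_mul_left, h.1.2.tsum_eq, h.2.2.1, mul_one] at hts
  exact hts

lemma supp_contig (h : COf p μ q) {a b j : ℤ} (ha : 0 < p a) (hb : 0 < p b)
    (haj : a ≤ j) (hjb : j ≤ b) : 0 < p j := by
  rcases (h.1.1 j).lt_or_eq with hpj | hpj
  · exact hpj
  · exfalso
    rcases hjb.lt_or_eq with hjb' | rfl
    · have hc := cumul_pos h ha hb haj hjb'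
      rw [h.2.2.2 j, ← hpj, mul_zero] at hc
      exact lt_irrefl 0 hc
    · exact hb.ne' hpj.symm

lemma exists_pos (h : IsPMF p) : ∃ j, 0 < p j := by
  by_contra hc; push_neg at hc
  have hz : p = fun _ => 0 := funext fun j => le_antisymm (hc j) (h.1 j)
  have h0 : HasSum p 0 := by rw [hz]; exact hasSum_zero
  exact one_ne_zero (h.2.unique h0)

lemma left_compat (h : COf p μ q) (h' : COf p' μ q) {a L : ℤ}
    (ha : 0 < p a) (hL : 0 < p' L) (hmin : ∀ k, p' k ≠ 0 → L ≤ k) (hlt : a < L) :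
    False := by
  have hq : q L = μ - (L : ℝ) := by
    have h1 := cumul_at_min (p := p') (μ := μ) L hmin
    have h2 := h'.2.2.2 L
    rw [h1] at h2
    exact mul_right_cancel₀ hL.ne' h2.symm
  have hB : ∃ b, p b ≠ 0 ∧ L - 1 < b := by
    by_contra hB; push_neg at hB
    have h1 := mean_le' h (L - 1) fun k hk => by have := hB k hk; omega
    have h2 := mean_lt h' (L - 1) fun k hk => by have := hmin k hk; omega
    linarith
  obtain ⟨b, hbne, hbgt⟩ := hB
  have hbpos : 0 < p b := (h.1.1 b).lt_of_ne (Ne.symm hbne)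
  have hpos := cumul_pos h ha hbpos (by omega : a ≤ L - 1) hbgt
  have hstep := cumul_step h (L - 1)
  have hLL : L - 1 + 1 = L := by omega
  rw [hLL] at hstep
  have hcast : ((L - 1 : ℤ) : ℝ) + 1 = (L : ℝ) := by push_cast; ring
  rw [hcast] at hstep
  have hcL : cumul p μ L = (μ - (L : ℝ)) * p L := by rw [h.2.2.2 L, hq]
  rw [hcL] at hstep
  linarith

lemma right_compat (h : COf p μ q) (h' : COf p' μ q) {R b : ℤ}
    (hR : 0 < p R) (hmax : ∀ k, p k ≠ 0 → k ≤ R) (hb : 0 < p' b) (hlt : R < b) :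
    False := by
  have hq : q R = 0 := by
    have h1 := cumul_zero_above h R hmax
    have h2 := h.2.2.2 R
    rw [h1] at h2
    exact (mul_eq_zero.mp h2.symm).resolve_right hR.ne'
  have hA : ∃ a, p' a ≠ 0 ∧ a ≤ R := by
    by_contra hA; push_neg at hA
    have h1 := mean_lt h' R fun k hk => by have := hA k hk; omega
    have h2 := mean_le' h R hmax
    linarith
  obtain ⟨a, hane, haR⟩ := hA
  have hapos : 0 < p' a := (h'.1.1 a).lt_of_ne (Ne.symm hane)
  have hpos := cumul_pos h' hapos hb haR hlt
  rw [h'.2.2.2 R, hq, zero_mul] at hpos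
  exact lt_irrefl 0 hpos

lemma supp_mono (h : COf p μ q) (h' : COf p' μ q) {j : ℤ} (hj : 0 < p j) :
    0 < p' j := by
  by_cases hA : ∃ a, p' a ≠ 0 ∧ a ≤ j
  · by_cases hB : ∃ b, p' b ≠ 0 ∧ j ≤ b
    · obtain ⟨a, hane, haj⟩ := hA
      obtain ⟨b, hbne, hjb⟩ := hB
      exact supp_contig h' ((h'.1.1 a).lt_of_ne (Ne.symm hane))
        ((h'.1.1 b).lt_of_ne (Ne.symm hbne)) haj hjb
    · exfalso
      push_neg at hB
      obtain ⟨R, hRne, hRmax⟩ := Int.exists_greatest_of_bdd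
        (P := fun z => p' z ≠ 0) ⟨j, fun z hz => by have := hB z hz; omega⟩
          (hA.imp fun a ha => ha.1)
      have hRlt : R < j := by have := hB R hRne; omega
      exact right_compat h' h ((h'.1.1 R).lt_of_ne (Ne.symm hRne)) hRmax hj hRlt
  · exfalso
    push_neg at hA
    have hinh : ∃ z, p' z ≠ 0 := by
      obtain ⟨z, hz⟩ := exists_pos h'.1
      exact ⟨z, hz.ne'⟩
    obtain ⟨L, hLne, hLmin⟩ := Int.exists_least_of_bdd
      (P := fun z => p' z ≠ 0) ⟨j + 1, fun z hz => by have := hA z hz; omega⟩ hinh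
    exact left_compat h h' hj ((h'.1.1 L).lt_of_ne (Ne.symm hLne)) hLmin
      (by have := hA L hLne; omega)

lemma step_ratio (h : COf p μ q) (h' : COf p' μ q) {j : ℤ}
    (hj : 0 < p j) (hj1 : 0 < p (j + 1)) :
    p (j + 1) * p' j = p' (j + 1) * p j := by
  set D : ℝ := q (j + 1) + ((j : ℝ) + 1) - μ with hD
  have key : ∀ r : ℤ → ℝ, COf r μ q → D * r (j + 1) = q j * r j := by
    intro r hr
    have hstep := cumul_step hr j
    rw [hr.2.2.2 (j + 1), hr.2.2.2 j] at hstep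
    rw [hD]; linear_combination hstep
  have hkey := key p h
  have hkey' := key p' h'
  have hDpos : 0 < D * p (j + 1) := by
    rw [hkey, ← h.2.2.2 j]
    exact cumul_pos h hj hj1 le_rfl (by omega)
  have hDne : D ≠ 0 := by
    intro hD0
    rw [hD0, zero_mul] at hDpos
    exact lt_irrefl 0 hDpos
  apply mul_left_cancel₀ hDne
  calc D * (p (j + 1) * p' j) = (D * p (j + 1)) * p' j := by ring
    _ = (q j * p j) * p' j := by rw [hkey]
    _ = (q j * p' j) * p j := by ring
    _ = (D * p' (j + 1)) * p j := by rw [hkey']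
    _ = D * (p' (j + 1) * p j) := by ring

lemma COf_eq (h : COf p μ q) (h' : COf p' μ q) : ∀ j, p j = p' j := by
  obtain ⟨j₀, hj₀⟩ := exists_pos h.1
  have hup : ∀ n, j₀ ≤ n → (0 < p n → p' n * p j₀ = p n * p' j₀) := by
    refine Int.le_induction (by intro _; ring) ?_
    intro n hn ih hpn1
    have hpn : 0 < p n := supp_contig h hj₀ hpn1 hn (by omega)
    have ihe := ih hpn
    have hr := step_ratio h h' hpn hpn1
    have h2 : p n * (p' (n + 1) * p j₀) = p n * (p (n + 1) * p' j₀) := by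
      linear_combination p (n + 1) * ihe - p j₀ * hr
    exact mul_left_cancel₀ hpn.ne' h2
  have hdown : ∀ n, n ≤ j₀ → (0 < p n → p' n * p j₀ = p n * p' j₀) := by
    refine Int.le_induction_down (by intro _; ring) ?_
    intro n hn ih hpn1
    have hpn : 0 < p n := supp_contig h hpn1 hj₀ (by omega) hn
    have ihe := ih hpn
    have hr0 := step_ratio h h' (j := n - 1) hpn1 (by rwa [show n - 1 + 1 = n by omega])
    rw [show n - 1 + 1 = n by omega] at hr0
    have h2 : p n * (p' (n - 1) * p j₀) = p n * (p (n - 1) * p' j₀) := by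
      linear_combination p (n - 1) * ihe + p j₀ * hr0
    exact mul_left_cancel₀ hpn.ne' h2
  have key : ∀ j, p' j * p j₀ = p j * p' j₀ := by
    intro j
    by_cases hpj : 0 < p j
    · rcases le_total j₀ j with hle | hle
      · exact hup j hle hpj
      · exact hdown j hle hpj
    · have hpj0 : p j = 0 := le_antisymm (not_lt.mp hpj) (h.1.1 j)
      have hpj0' : p' j = 0 := by
        by_contra hne
        have hpos' : 0 < p' j := (h'.1.1 j).lt_of_ne (Ne.symm hne)
        exact hpj (supp_mono h' h hpos')
      rw [hpj0, hpj0']; ring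
  have hs1 : HasSum (fun j => p' j * p j₀) (1 * p j₀) := h'.1.2.mul_right _
  have hs2 : HasSum (fun j => p j * p' j₀) (1 * p' j₀) := h.1.2.mul_right _
  have hfe : (fun j => p' j * p j₀) = fun j => p j * p' j₀ := funext key
  rw [hfe] at hs1
  have heq : p j₀ = p' j₀ := by
    have := hs1.unique hs2
    linarith
  intro j
  have hk := key j
  rw [← heq] at hk
  exact (mul_right_cancel₀ hj₀.ne' hk).symm

end AuxCO

theorem stmt4 (p p' : ℤ → ℝ) (μ δ β γ : ℝ)
    (h : CO p μ δ β γ) (h' : CO p' μ δ β γ) :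
    supp p = supp p' ∧ ∀ j : ℤ, p j = p' j := by
  have hpt := COf_eq h h'
  exact ⟨by ext j; simp [supp, hpt j], hpt⟩
end
end

section
/- Let X ∼ CO(μ; δ, β, γ) with pmf p, and assume E|X|^{2i−1} < ∞ for some i ∈ {1, 2, …}. If the support of X is unbounded above, then j^{2i} p(j) → 0 as j → +∞; if the support is unbounded below, then j^{2i} p(j) → 0 as j → −∞. -/
open scoped Classical

noncomputable section

/-!
Since the mean is `μ`, the defining relation reads `q(j) p(j) = ∑_{k > j} (k - μ) p(k)`, which
is `≥ 0` for `j ≥ μ`; so a support unbounded above forces `δ > 0`, or `δ = 0` and `β ≥ 0`.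
If `δ > 0`, then `q(j) ≥ δ j² / 2` eventually, while `j^{2i-2} ∑_{k > j} (k - μ) p(k)` is
dominated termwise by `(1 + |μ|) |k|^{2i-1} p(k)` and tends to `0` by dominated convergence.
If `δ = 0`, the relation becomes a first-order recurrence with `p(j+1)/p(j) → β/(β+1) < 1`, so
`p` decays geometrically. The lower tail is the upper tail of `j ↦ p(-j) ∼ CO(-μ; δ, -β-1, γ-μ)`.
-/

open Filter Topology

section FiniteMean

variable {p : ℤ → ℝ} {μ : ℝ}

lemma IsPMF.summable_intCast_mul (hp : IsPMF p)
    (habs : Summable fun j : ℤ => |(j : ℝ)| * p j) : Summable fun k : ℤ => (k : ℝ) * p k :=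
  habs.of_norm_bounded fun k => by rw [Real.norm_eq_abs, abs_mul, abs_of_nonneg (hp.1 k)]

lemma IsPMF.summable_sub_mul (hp : IsPMF p) (habs : Summable fun j : ℤ => |(j : ℝ)| * p j)
    (c : ℝ) : Summable fun k : ℤ => ((k : ℝ) - c) * p k :=
  ((hp.summable_intCast_mul habs).sub (hp.2.summable.mul_left c)).congr fun k => by ring

lemma cumul_eq_tsum_Ioi (hp : IsPMF p) (habs : Summable fun j : ℤ => |(j : ℝ)| * p j)
    (hmean : ∑' j : ℤ, (j : ℝ) * p j = μ) (j : ℤ) :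
    cumul p μ j = ∑' k : Set.Ioi j, ((k : ℝ) - μ) * p k := by
  have hsum := hp.summable_sub_mul habs μ
  have htot : ∑' k : ℤ, ((k : ℝ) - μ) * p k = 0 := by
    simp only [sub_mul]
    rw [(hp.summable_intCast_mul habs).tsum_sub (hp.2.summable.mul_left μ), tsum_mul_left,
      hp.2.tsum_eq, hmean]
    ring
  have hsplit := hsum.tsum_subtype_add_tsum_subtype_compl (Set.Iic j)
  rw [Set.compl_Iic, htot] at hsplit
  have hneg : cumul p μ j = -∑' k : Set.Iic j, ((k : ℝ) - μ) * p k := by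
    rw [← tsum_neg]; exact tsum_congr fun k => by ring
  linarith

lemma cumul_nonneg (hp : IsPMF p) (habs : Summable fun j : ℤ => |(j : ℝ)| * p j)
    (hmean : ∑' j : ℤ, (j : ℝ) * p j = μ) {j : ℤ} (hj : μ ≤ j) :
    0 ≤ cumul p μ j := by
  rw [cumul_eq_tsum_Ioi hp habs hmean]
  refine tsum_nonneg fun k => mul_nonneg ?_ (hp.1 k)
  have : (j : ℝ) < k := by exact_mod_cast k.2
  linarith

lemma cumul_add_one (hp : IsPMF p) (habs : Summable fun j : ℤ => |(j : ℝ)| * p j) (j : ℤ) :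
    cumul p μ (j + 1) = cumul p μ j + (μ - (j + 1 : ℤ)) * p (j + 1) := by
  have hsum : Summable fun k : ℤ => (μ - k) * p k :=
    (hp.summable_sub_mul habs μ).neg.congr fun k => by ring
  have hIic : Set.Iic (j + 1) = Set.Iic j ∪ {j + 1} := by
    ext k; simp only [Set.mem_Iic, Set.mem_union, Set.mem_singleton_iff]; omega
  have hcumul (i : ℤ) : cumul p μ i = ∑' k : Set.Iic i, (μ - k) * p k := rfl
  rw [hcumul, hcumul, hIic, (hsum.subtype _).tsum_union_disjoint (by simp) (hsum.subtype _),
    tsum_singleton (j + 1) fun k : ℤ => (μ - k) * p k]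

lemma cumul_comp_neg (hp : IsPMF p) (habs : Summable fun j : ℤ => |(j : ℝ)| * p j)
    (hmean : ∑' j : ℤ, (j : ℝ) * p j = μ) (j : ℤ) :
    cumul (fun k => p (-k)) (-μ) j = cumul p μ (-j) + ((-j : ℤ) - μ) * p (-j) := by
  let e : Set.Iic j ≃ Set.Ioi (-j - 1) :=
    (Equiv.neg ℤ).subtypeEquiv fun k => by
      simp only [Set.mem_Iic, Set.mem_Ioi, Equiv.neg_apply]; omega
  have hreindex :
      cumul (fun k => p (-k)) (-μ) j = ∑' k : Set.Ioi (-j - 1), ((k : ℝ) - μ) * p k := by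
    rw [← e.tsum_eq]
    refine tsum_congr fun k => ?_
    change (-μ - (k : ℤ)) * p (-k) = (((-k : ℤ) : ℝ) - μ) * p (-k)
    push_cast
    ring
  rw [hreindex, ← cumul_eq_tsum_Ioi hp habs hmean, ← sub_add_cancel (-j) 1,
    cumul_add_one hp habs]
  simp only [sub_add_cancel]
  ring

lemma IsPMF.comp_neg (hp : IsPMF p) : IsPMF fun j => p (-j) :=
  ⟨fun j => hp.1 (-j), (Equiv.neg ℤ).hasSum_iff.2 hp.2⟩

lemma FinAbsMoment.comp_neg {r : ℕ} (h : FinAbsMoment p r) : FinAbsMoment (fun j => p (-j)) r :=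
  (h.comp_injective neg_injective).congr fun j => by simp

lemma CO.comp_neg {δ β γ : ℝ} (h : CO p μ δ β γ) :
    CO (fun j => p (-j)) (-μ) δ (-β - 1) (γ - μ) := by
  obtain ⟨hp, habs, hmean, hcumul⟩ := h
  refine ⟨hp.comp_neg, (habs.comp_injective neg_injective).congr fun j => by simp, ?_,
    fun j => ?_⟩
  · rw [← hmean, ← tsum_neg, ← (Equiv.neg ℤ).tsum_eq]
    simp
  · rw [cumul_comp_neg hp habs hmean, hcumul]
    simp only [quad, quadR]
    push_cast
    ring

end FiniteMean

lemma tendsto_zpow_mul_pow_atTop {r : ℝ} (hr0 : 0 ≤ r) (hr1 : r < 1) (n : ℕ) :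
    Tendsto (fun j : ℤ => (j : ℝ) ^ n * r ^ j) atTop (𝓝 0) := by
  rw [← Nat.map_cast_int_atTop, tendsto_map'_iff]
  simpa [Function.comp_def] using
    tendsto_pow_const_mul_const_pow_of_abs_lt_one n (abs_lt.2 ⟨by linarith, hr1⟩)

lemma tendsto_pow_mul_atTop_of_eventually_le_mul {f : ℤ → ℝ} {r : ℝ} (hf : ∀ j, 0 ≤ f j)
    (hr0 : 0 < r) (hr1 : r < 1) (h : ∀ᶠ j in atTop, f (j + 1) ≤ r * f j) (n : ℕ) :
    Tendsto (fun j : ℤ => (j : ℝ) ^ n * f j) atTop (𝓝 0) := by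
  obtain ⟨N, hN⟩ := eventually_atTop.1 h
  set C := f N / r ^ N
  have hgeom : ∀ j ≥ N, f j ≤ C * r ^ j := by
    refine Int.leInduction (div_mul_cancel₀ _ (zpow_ne_zero _ hr0.ne')).ge fun j hj ih => ?_
    calc f (j + 1) ≤ r * f j := hN j hj
      _ ≤ r * (C * r ^ j) := by gcongr
      _ = C * r ^ (j + 1) := by rw [zpow_add_one₀ hr0.ne']; ring
  have hlim := (tendsto_zpow_mul_pow_atTop hr0.le hr1 n).const_mul C
  rw [mul_zero] at hlim
  refine tendsto_of_tendsto_of_tendsto_of_le_of_le' tendsto_const_nhds hlim ?_ ?_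
  · filter_upwards [eventually_ge_atTop 0] with j hj
    exact mul_nonneg (pow_nonneg (by exact_mod_cast hj) n) (hf j)
  · filter_upwards [eventually_ge_atTop (max N 0)] with j hj
    have hj0 : (0 : ℝ) ≤ j := by exact_mod_cast (le_max_right N 0).trans hj
    calc (j : ℝ) ^ n * f j ≤ (j : ℝ) ^ n * (C * r ^ j) :=
          mul_le_mul_of_nonneg_left (hgeom j ((le_max_left N 0).trans hj)) (pow_nonneg hj0 n)
      _ = C * ((j : ℝ) ^ n * r ^ j) := by ring

lemma tendsto_pow_mul_tsum_Ioi {p : ℤ → ℝ} (hp : ∀ j, 0 ≤ p j) {m : ℕ}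
    (hmom : FinAbsMoment p (m + 1)) (μ : ℝ) :
    Tendsto (fun j : ℤ => (j : ℝ) ^ m * ∑' k : Set.Ioi j, ((k : ℝ) - μ) * p k)
      atTop (𝓝 0) := by
  have hind (j : ℤ) : (j : ℝ) ^ m * ∑' k : Set.Ioi j, ((k : ℝ) - μ) * p k =
      ∑' k, (Set.Ioi j).indicator (fun k : ℤ => (j : ℝ) ^ m * (((k : ℝ) - μ) * p k)) k := by
    rw [← tsum_mul_left]
    exact tsum_subtype (Set.Ioi j) fun k : ℤ => (j : ℝ) ^ m * (((k : ℝ) - μ) * p k)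
  simp_rw [hind]
  rw [← tsum_zero]
  refine tendsto_tsum_of_dominated_convergence (hmom.mul_left (1 + |μ|)) (fun k => ?_) ?_
  · refine tendsto_const_nhds.congr' ?_
    filter_upwards [eventually_ge_atTop k] with j hj
    simp [Set.indicator_of_notMem (show k ∉ Set.Ioi j from not_lt.2 hj)]
  · filter_upwards [eventually_ge_atTop 0] with j hj k
    by_cases hk : k ∈ Set.Ioi j
    · have hjk : (j : ℝ) < k := by exact_mod_cast hk
      have hj0 : (0 : ℝ) ≤ j := by exact_mod_cast hj
      have hk1 : (1 : ℝ) ≤ k := by exact_mod_cast (hj.trans_lt hk)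
      rw [Set.indicator_of_mem hk, norm_mul, norm_mul, Real.norm_eq_abs, Real.norm_eq_abs,
        Real.norm_eq_abs, abs_of_nonneg (hp k), abs_of_nonneg (pow_nonneg hj0 m),
        abs_of_nonneg (by linarith : (0 : ℝ) ≤ k), pow_succ]
      have hpow : (j : ℝ) ^ m ≤ (k : ℝ) ^ m := pow_le_pow_left₀ hj0 hjk.le m
      have hsub : |(k : ℝ) - μ| ≤ (1 + |μ|) * k := by
        rw [abs_le]; constructor <;> nlinarith [abs_nonneg μ, le_abs_self μ, neg_abs_le μ]
      calc (j : ℝ) ^ m * (|(k : ℝ) - μ| * p k) ≤ (k : ℝ) ^ m * ((1 + |μ|) * k * p k) := by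
            have := hp k
            gcongr
        _ = (1 + |μ|) * ((k : ℝ) ^ m * k * p k) := by ring
    · rw [Set.indicator_of_notMem hk, norm_zero]
      exact mul_nonneg (by positivity) (mul_nonneg (by positivity) (hp k))

lemma quadR_leading_of_frequently_nonneg {δ β γ : ℝ}
    (h : ∃ᶠ x in atTop, 0 ≤ quadR δ β γ x) : 0 < δ ∨ δ = 0 ∧ 0 ≤ β := by
  by_contra! hc
  refine h ?_
  rcases (hc.1).lt_or_eq with hδ | rfl
  · filter_upwards [eventually_ge_atTop 1, eventually_ge_atTop ((|β| + |γ| + 1) / -δ)]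
      with x hx1 hx
    rw [div_le_iff₀ (by linarith)] at hx
    simp only [quadR, not_le]
    nlinarith [le_abs_self β, le_abs_self γ, abs_nonneg β, abs_nonneg γ]
  · have hβ := hc.2 rfl
    filter_upwards [eventually_ge_atTop ((|γ| + 1) / -β)] with x hx
    rw [div_le_iff₀ (by linarith)] at hx
    simp only [quadR, not_le]
    nlinarith [le_abs_self γ]

lemma quadR_eventually_ge_half {δ β γ : ℝ} (hδ : 0 < δ) :
    ∀ᶠ x in atTop, δ / 2 * x ^ 2 ≤ quadR δ β γ x := by
  filter_upwards [eventually_ge_atTop 1, eventually_ge_atTop (2 * (|β| + |γ|) / δ)]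
    with x hx1 hx
  rw [div_le_iff₀ hδ] at hx
  simp only [quadR]
  nlinarith [neg_abs_le β, neg_abs_le γ, abs_nonneg β, abs_nonneg γ]

namespace CO

variable {p : ℤ → ℝ} {μ δ β γ : ℝ}

lemma quad_nonneg_of_mem_supp (h : CO p μ δ β γ) {j : ℤ} (hj : j ∈ supp p)
    (hμj : μ ≤ j) :
    0 ≤ quad δ β γ j := by
  obtain ⟨hp, habs, hmean, hcumul⟩ := h
  have := cumul_nonneg hp habs hmean hμj
  rw [hcumul] at this
  exact nonneg_of_mul_nonneg_left this hj

lemma leading_of_frequently_mem_supp (h : CO p μ δ β γ)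
    (hub : ∃ᶠ j in atTop, j ∈ supp p) :
    0 < δ ∨ δ = 0 ∧ 0 ≤ β := by
  refine quadR_leading_of_frequently_nonneg (γ := γ) (tendsto_intCast_atTop_atTop.frequently ?_)
  refine (hub.and_eventually (eventually_ge_atTop ⌈μ⌉)).mono fun j ⟨hj, hμj⟩ => ?_
  exact h.quad_nonneg_of_mem_supp hj (Int.ceil_le.1 hμj)

lemma tendsto_pow_mul_atTop_of_pos (h : CO p μ δ β γ) (hδ : 0 < δ) {m : ℕ}
    (hmom : FinAbsMoment p (m + 1)) :
    Tendsto (fun j : ℤ => (j : ℝ) ^ (m + 2) * p j) atTop (𝓝 0) := by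
  obtain ⟨hp, habs, hmean, hcumul⟩ := h
  have hlim := (tendsto_pow_mul_tsum_Ioi hp.1 hmom μ).const_mul (2 / δ)
  rw [mul_zero] at hlim
  refine tendsto_of_tendsto_of_tendsto_of_le_of_le' tendsto_const_nhds hlim ?_ ?_
  · filter_upwards [eventually_ge_atTop 0] with j hj
    exact mul_nonneg (pow_nonneg (by exact_mod_cast hj) _) (hp.1 j)
  · filter_upwards [eventually_ge_atTop 0,
      tendsto_intCast_atTop_atTop.eventually (quadR_eventually_ge_half (β := β) (γ := γ) hδ)]
      with j hj hquad
    have hj0 : (0 : ℝ) ≤ (j : ℝ) ^ m * p j :=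
      mul_nonneg (pow_nonneg (by exact_mod_cast hj) _) (hp.1 j)
    calc (j : ℝ) ^ (m + 2) * p j = 2 / δ * (δ / 2 * (j : ℝ) ^ 2 * ((j : ℝ) ^ m * p j)) := by
          field_simp; ring
      _ ≤ 2 / δ * (quad δ β γ j * ((j : ℝ) ^ m * p j)) := by gcongr; exact hquad
      _ = 2 / δ * ((j : ℝ) ^ m * ∑' k : Set.Ioi j, ((k : ℝ) - μ) * p k) := by
          rw [← cumul_eq_tsum_Ioi hp habs hmean, hcumul]; ring

lemma quad_mul_add_one (h : CO p μ δ β γ) (j : ℤ) :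
    (quad δ β γ (j + 1) + ((j + 1 : ℤ) - μ)) * p (j + 1) = quad δ β γ j * p j := by
  obtain ⟨hp, habs, -, hcumul⟩ := h
  have := cumul_add_one (μ := μ) hp habs j
  rw [hcumul, hcumul] at this
  linarith

lemma tendsto_pow_mul_atTop_of_linear (h : CO p μ 0 β γ) (hβ : 0 ≤ β) (n : ℕ) :
    Tendsto (fun j : ℤ => (j : ℝ) ^ n * p j) atTop (𝓝 0) := by
  have hp0 := h.1.1
  -- the recurrence ratio `(β j + γ) / ((β + 1) (j + 1) + γ - μ)` tends to `β / (β + 1)`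
  refine tendsto_pow_mul_atTop_of_eventually_le_mul hp0 (r := (β + 1) / (β + 2))
    (by positivity) ((div_lt_one (by linarith)).2 (by linarith)) ?_ n
  have hlin : ∀ᶠ x : ℝ in atTop, μ - γ ≤ (β + 1) * x ∧
      (β + 2) * (β * x + γ) ≤ (β + 1) * ((β + 1) * (x + 1) + γ - μ) := by
    filter_upwards [eventually_ge_atTop ((μ - γ) / (β + 1)),
      eventually_ge_atTop ((β + 2) * γ - (β + 1) ^ 2 - (β + 1) * (γ - μ))] with x hx hx'
    rw [div_le_iff₀ (by linarith)] at hx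
    constructor <;> nlinarith
  filter_upwards [tendsto_intCast_atTop_atTop.eventually hlin] with j ⟨hpos, hratio⟩
  have hD : 0 < (β + 1) * ((j : ℝ) + 1) + γ - μ := by nlinarith
  have hrec := h.quad_mul_add_one j
  simp only [quad, quadR] at hrec
  push_cast at hrec
  refine le_of_mul_le_mul_left ?_ hD
  calc ((β + 1) * ((j : ℝ) + 1) + γ - μ) * p (j + 1) = (β * j + γ) * p j := by linarith
    _ ≤ (β + 1) / (β + 2) * ((β + 1) * ((j : ℝ) + 1) + γ - μ) * p j := by
        gcongr
        · exact hp0 j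
        · rw [div_mul_eq_mul_div, le_div_iff₀ (by linarith)]; linarith
    _ = ((β + 1) * ((j : ℝ) + 1) + γ - μ) * ((β + 1) / (β + 2) * p j) := by ring

lemma tendsto_pow_mul_atTop (h : CO p μ δ β γ) {m : ℕ} (hmom : FinAbsMoment p (m + 1))
    (hub : ∃ᶠ j in atTop, j ∈ supp p) :
    Tendsto (fun j : ℤ => (j : ℝ) ^ (m + 2) * p j) atTop (𝓝 0) := by
  rcases h.leading_of_frequently_mem_supp hub with hδ | ⟨rfl, hβ⟩
  · exact h.tendsto_pow_mul_atTop_of_pos hδ hmom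
  · exact h.tendsto_pow_mul_atTop_of_linear hβ (m + 2)

end CO

theorem stmt9 (p : ℤ → ℝ) (μ δ β γ : ℝ) (h : CO p μ δ β γ) (i : ℕ) (hi : 1 ≤ i)
    (hmom : FinAbsMoment p (2 * i - 1)) :
    ((∀ N : ℤ, ∃ j ∈ supp p, N < j) →
      Filter.Tendsto (fun j : ℤ => (j : ℝ) ^ (2 * i) * p j) Filter.atTop (nhds 0)) ∧
    ((∀ N : ℤ, ∃ j ∈ supp p, j < N) →
      Filter.Tendsto (fun j : ℤ => (j : ℝ) ^ (2 * i) * p j) Filter.atBot (nhds 0)) := by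
  obtain ⟨m, hm1, hm2⟩ : ∃ m : ℕ, 2 * i - 1 = m + 1 ∧ 2 * i = m + 2 :=
    ⟨2 * i - 2, by omega, by omega⟩
  rw [hm1] at hmom
  refine ⟨fun hub => hm2 ▸ h.tendsto_pow_mul_atTop hmom (frequently_atTop'.2 fun N => ?_),
    fun hlb => ?_⟩
  · obtain ⟨j, hj, hNj⟩ := hub N
    exact ⟨j, hNj, hj⟩
  · have hub : ∃ᶠ j in atTop, j ∈ supp fun k => p (-k) := frequently_atTop'.2 fun N => by
      obtain ⟨j, hj, hjN⟩ := hlb (-N)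
      exact ⟨-j, by omega, by simpa [supp] using hj⟩
    have hneg := (h.comp_neg.tendsto_pow_mul_atTop hmom.comp_neg hub).comp tendsto_neg_atBot_atTop
    refine hneg.congr fun j => ?_
    simp [← hm2, Even.neg_pow (even_two_mul i)]
end
end

section
/- Let the non-constant random variable X ∼ CO(μ; q) satisfy E|X|³ < ∞, and let X* have pmf p*(j) = q(j)p(j)/E q(X). Let g be a function defined on the support of X. Then: (a) if E[Δg(X*)]² < ∞ then E g²(X) < ∞; (b) if E|Δg(X*)| < ∞ then E|g(X)| < ∞. -/
open scoped Classical

noncomputable section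

/-! Write `Q i = q i * p i = ∑_{k ≤ i} (μ - k) p k = ∑_{k > i} (k - μ) p k ≥ 0`, so that
`E h(X*)` is proportional to `∑ h i * Q i`. Telescoping `g j` from `⌈μ⌉` (if `j ≥ ⌈μ⌉`) or from
`⌊μ⌋` (if `j ≤ ⌊μ⌋`) and using Cauchy–Schwarz gives
`g j ^ 2 ≤ C + 2 |j - μ| ∑ (Δg i) ^ 2`, the sum over the `i` passed on the way, and likewise
`|g j| ≤ C + |j - μ| ∑ |Δg i|`. Summing against `p` and exchanging the order of summation, each
`i` collects the weight `∑ |j - μ| p j` over the `j` lying beyond `i` as seen from `μ`, and this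
is at most `Q i` by the two expressions for `Q i`. -/

theorem summable_mul_sum_of_summable_mul_tsum {α β : Type*} [DecidableEq α] {u : β → ℝ}
    {G : α → ℝ} (s : β → Finset α) (hu : ∀ j, 0 ≤ u j) (hus : Summable u) (hG : ∀ i, 0 ≤ G i)
    (h : Summable fun i => G i * ∑' j, if i ∈ s j then u j else 0) :
    Summable fun j => u j * ∑ i ∈ s j, G i := by
  set F : α × β → ℝ := fun x => if x.1 ∈ s x.2 then G x.1 * u x.2 else 0
  have hF : 0 ≤ F := fun x => by
    simp only [F, Pi.zero_apply]; split_ifs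
    exacts [mul_nonneg (hG _) (hu _), le_rfl]
  have hFs : Summable F := by
    refine (summable_prod_of_nonneg hF).2 ⟨fun i => ?_, ?_⟩
    · refine (hus.mul_left (G i)).of_nonneg_of_le (fun j => hF (i, j)) fun j => ?_
      simp only [F]; split_ifs
      exacts [le_rfl, mul_nonneg (hG _) (hu _)]
    · refine h.congr fun i => ?_
      rw [← tsum_mul_left]
      exact tsum_congr fun j => by simp only [F, mul_ite, mul_zero]
  refine ((summable_prod_of_nonneg fun x => hF x.swap).1 hFs.prod_symm).2.congr fun j => ?_
  simp only [F, Prod.swap_prod_mk]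
  rw [tsum_eq_sum (s := s j) fun i hi => if_neg hi, Finset.mul_sum]
  exact Finset.sum_congr rfl fun i hi => by rw [if_pos hi, mul_comm]

theorem Int.sum_Ico_sub (g : ℤ → ℝ) {a b : ℤ} (hab : a ≤ b) :
    ∑ i ∈ Finset.Ico a b, (g (i + 1) - g i) = g b - g a := by
  induction b, hab using Int.leInduction with
  | base => simp
  | succ n hn ih =>
    rw [← Finset.sum_Ico_add_eq_sum_Ico_add_one hn, ih]
    ring

/-- The integers `i` whose differences `g (i + 1) - g i` telescope from the integer next to `μ`
on the side of `j` (`⌈μ⌉` if `⌈μ⌉ ≤ j`, `⌊μ⌋` if `j ≤ ⌊μ⌋`) to `j`; at most one of the two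
intervals is nonempty. -/
def stepsFrom (μ : ℝ) (j : ℤ) : Finset ℤ := Finset.Ico ⌈μ⌉ j ∪ Finset.Ico j ⌊μ⌋

section stepsFrom

variable {μ : ℝ} {i j : ℤ}

theorem mem_stepsFrom : i ∈ stepsFrom μ j ↔ ⌈μ⌉ ≤ i ∧ i < j ∨ j ≤ i ∧ i < ⌊μ⌋ := by
  simp [stepsFrom]

theorem stepsFrom_of_ceil_le (hj : ⌈μ⌉ ≤ j) : stepsFrom μ j = Finset.Ico ⌈μ⌉ j := by
  have : ⌊μ⌋ ≤ j := (Int.floor_le_ceil μ).trans hj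
  simp [stepsFrom, Finset.Ico_eq_empty_of_le this]

theorem stepsFrom_of_le_floor (hj : j ≤ ⌊μ⌋) : stepsFrom μ j = Finset.Ico j ⌊μ⌋ := by
  have : j ≤ ⌈μ⌉ := hj.trans (Int.floor_le_ceil μ)
  simp [stepsFrom, Finset.Ico_eq_empty_of_le this]

theorem ceil_le_or_le_floor (μ : ℝ) (j : ℤ) : ⌈μ⌉ ≤ j ∨ j ≤ ⌊μ⌋ := by
  have := Int.ceil_le_floor_add_one μ
  omega

theorem card_stepsFrom_le (μ : ℝ) (j : ℤ) : ((stepsFrom μ j).card : ℝ) ≤ |j - μ| := by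
  rcases ceil_le_or_le_floor μ j with hj | hj
  · rw [stepsFrom_of_ceil_le hj]
    have hcard : ((Finset.Ico ⌈μ⌉ j).card : ℝ) = j - ⌈μ⌉ := by
      exact_mod_cast Int.card_Ico_of_le _ _ hj
    rw [hcard]
    linarith [Int.le_ceil μ, le_abs_self ((j : ℝ) - μ)]
  · rw [stepsFrom_of_le_floor hj]
    have hcard : ((Finset.Ico j ⌊μ⌋).card : ℝ) = ⌊μ⌋ - j := by
      exact_mod_cast Int.card_Ico_of_le _ _ hj
    rw [hcard]
    linarith [Int.floor_le μ, neg_abs_le ((j : ℝ) - μ)]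

theorem sum_stepsFrom_le {G : ℤ → ℝ} (hG : ∀ i, 0 ≤ G i) (μ : ℝ) (j : ℤ) :
    ∑ i ∈ stepsFrom μ j, G i ≤ |j - μ| * ∑ i ∈ stepsFrom μ j, G i := by
  rcases (stepsFrom μ j).eq_empty_or_nonempty with hs | hs
  · simp [hs]
  · refine le_mul_of_one_le_left (Finset.sum_nonneg fun i _ => hG i) ?_
    exact le_trans (by exact_mod_cast hs.card_pos) (card_stepsFrom_le μ j)

theorem exists_abs_sub_eq_abs_sum_stepsFrom (g : ℤ → ℝ) (μ : ℝ) (j : ℤ) :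
    ∃ c, (c = ⌈μ⌉ ∨ c = ⌊μ⌋) ∧
      |g j - g c| = |∑ i ∈ stepsFrom μ j, (g (i + 1) - g i)| := by
  rcases ceil_le_or_le_floor μ j with hj | hj
  · exact ⟨⌈μ⌉, .inl rfl, by rw [stepsFrom_of_ceil_le hj, Int.sum_Ico_sub g hj]⟩
  · exact ⟨⌊μ⌋, .inr rfl, by rw [stepsFrom_of_le_floor hj, Int.sum_Ico_sub g hj, abs_sub_comm]⟩

theorem sq_le_stepsFrom (g : ℤ → ℝ) (μ : ℝ) (j : ℤ) :
    g j ^ 2 ≤ 2 * (g ⌈μ⌉ ^ 2 + g ⌊μ⌋ ^ 2) +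
      |j - μ| * ∑ i ∈ stepsFrom μ j, 2 * (g (i + 1) - g i) ^ 2 := by
  obtain ⟨c, hc, hgc⟩ := exists_abs_sub_eq_abs_sum_stepsFrom g μ j
  have hcs : (g j - g c) ^ 2 ≤ |j - μ| * ∑ i ∈ stepsFrom μ j, (g (i + 1) - g i) ^ 2 := by
    rw [← sq_abs, hgc, sq_abs]
    refine sq_sum_le_card_mul_sum_sq.trans ?_
    exact mul_le_mul_of_nonneg_right (card_stepsFrom_le μ j)
      (Finset.sum_nonneg fun i _ => sq_nonneg _)
  have hgc2 : g c ^ 2 ≤ g ⌈μ⌉ ^ 2 + g ⌊μ⌋ ^ 2 := by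
    rcases hc with rfl | rfl <;> nlinarith [sq_nonneg (g ⌈μ⌉), sq_nonneg (g ⌊μ⌋)]
  rw [← Finset.mul_sum]
  nlinarith [sq_nonneg (g j - 2 * g c)]

theorem abs_le_stepsFrom (g : ℤ → ℝ) (μ : ℝ) (j : ℤ) :
    |g j| ≤ |g ⌈μ⌉| + |g ⌊μ⌋| + |j - μ| * ∑ i ∈ stepsFrom μ j, |g (i + 1) - g i| := by
  obtain ⟨c, hc, hgc⟩ := exists_abs_sub_eq_abs_sum_stepsFrom g μ j
  have hgc' : |g j - g c| ≤ |j - μ| * ∑ i ∈ stepsFrom μ j, |g (i + 1) - g i| :=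
    hgc ▸ (Finset.abs_sum_le_sum_abs _ _).trans (sum_stepsFrom_le (fun _ => abs_nonneg _) μ j)
  have hc' : |g c| ≤ |g ⌈μ⌉| + |g ⌊μ⌋| := by
    rcases hc with rfl | rfl <;> simp
  linarith [abs_sub_abs_le_abs_sub (g j) (g c)]

end stepsFrom

section cumul

variable {p : ℤ → ℝ} {μ : ℝ}

theorem cumul_eq_tsum_ite_le (i : ℤ) :
    cumul p μ i = ∑' j, if j ≤ i then (μ - j) * p j else 0 :=
  (tsum_subtype {k : ℤ | k ≤ i} fun k => (μ - k) * p k).trans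
    (tsum_congr fun _ => by simp [Set.indicator_apply])

theorem cumul_eq_tsum_ite_lt (hmean : HasSum (fun j : ℤ => (μ - j) * p j) 0) (i : ℤ) :
    cumul p μ i = ∑' j, if i < j then (j - μ) * p j else 0 := by
  have hle : Summable fun j : ℤ => if j ≤ i then (μ - j) * p j else 0 :=
    (hmean.summable.indicator {k | k ≤ i}).congr fun _ => by simp [Set.indicator_apply]
  have hsplit := hle.hasSum.sub hmean
  rw [sub_zero] at hsplit
  rw [cumul_eq_tsum_ite_le, ← hsplit.tsum_eq]
  refine tsum_congr fun j => ?_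
  by_cases hj : j ≤ i
  · rw [if_pos hj, if_neg (not_lt.2 hj), sub_self]
  · rw [if_neg hj, if_pos (not_le.1 hj)]
    ring

theorem cumul_nonneg_s12 (hp0 : ∀ j, 0 ≤ p j) (hmean : HasSum (fun j : ℤ => (μ - j) * p j) 0)
    (i : ℤ) : 0 ≤ cumul p μ i := by
  rcases lt_or_ge (i : ℝ) μ with hi | hi
  · rw [cumul_eq_tsum_ite_le]
    refine tsum_nonneg fun j => ?_
    split_ifs with hj
    · exact mul_nonneg (by linarith [(Int.cast_le (R := ℝ)).2 hj]) (hp0 j)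
    · exact le_rfl
  · rw [cumul_eq_tsum_ite_lt hmean]
    refine tsum_nonneg fun j => ?_
    split_ifs with hj
    · exact mul_nonneg (by linarith [(Int.cast_lt (R := ℝ)).2 hj]) (hp0 j)
    · exact le_rfl

theorem tsum_stepsFrom_le_cumul (hp0 : ∀ j, 0 ≤ p j)
    (hmean : HasSum (fun j : ℤ => (μ - j) * p j) 0) (i : ℤ) :
    (∑' j, if i ∈ stepsFrom μ j then |(j : ℝ) - μ| * p j else 0) ≤ cumul p μ i := by
  have hfc := Int.floor_le_ceil μ
  rcases le_or_gt ⌈μ⌉ i with hi | hi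
  · rw [cumul_eq_tsum_ite_lt hmean]
    refine (tsum_congr fun j => ?_).le
    have hmem : i ∈ stepsFrom μ j ↔ i < j := by rw [mem_stepsFrom]; omega
    simp only [hmem]
    split_ifs with hj
    · have : (⌈μ⌉ : ℝ) < j := by exact_mod_cast hi.trans_lt hj
      rw [abs_of_nonneg (by linarith [Int.le_ceil μ])]
    · rfl
  rcases lt_or_ge i ⌊μ⌋ with hi' | hi'
  · rw [cumul_eq_tsum_ite_le]
    refine (tsum_congr fun j => ?_).le
    have hmem : i ∈ stepsFrom μ j ↔ j ≤ i := by rw [mem_stepsFrom]; omega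
    simp only [hmem]
    split_ifs with hj
    · have : (j : ℝ) < ⌊μ⌋ := by exact_mod_cast hj.trans_lt hi'
      rw [abs_of_nonpos (by linarith [Int.floor_le μ]), neg_sub]
    · rfl
  · have hmem : ∀ j, i ∉ stepsFrom μ j := fun j => by rw [mem_stepsFrom]; omega
    simp only [hmem, if_false, tsum_zero]
    exact cumul_nonneg_s12 hp0 hmean i

theorem summable_mul_of_le_stepsFrom (hp0 : ∀ j, 0 ≤ p j)
    (hmean : HasSum (fun j : ℤ => (μ - j) * p j) 0) (hps : Summable p) {f G : ℤ → ℝ} (C : ℝ)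
    (hf : ∀ j, 0 ≤ f j) (hG : ∀ i, 0 ≤ G i)
    (hle : ∀ j, f j ≤ C + |(j : ℝ) - μ| * ∑ i ∈ stepsFrom μ j, G i)
    (hGQ : Summable fun i => G i * cumul p μ i) :
    Summable fun j => f j * p j := by
  have hu : Summable fun j : ℤ => |(j : ℝ) - μ| * p j :=
    hmean.summable.abs.congr fun j => by rw [abs_mul, abs_sub_comm, abs_of_nonneg (hp0 j)]
  have hGT : Summable fun i => G i *
      ∑' j, if i ∈ stepsFrom μ j then |(j : ℝ) - μ| * p j else 0 :=
    hGQ.of_nonneg_of_le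
      (fun i => mul_nonneg (hG i) (tsum_nonneg fun j => by
        split_ifs
        exacts [mul_nonneg (abs_nonneg _) (hp0 j), le_rfl]))
      fun i => mul_le_mul_of_nonneg_left (tsum_stepsFrom_le_cumul hp0 hmean i) (hG i)
  have hmaj := (hps.mul_left C).add (summable_mul_sum_of_summable_mul_tsum (stepsFrom μ)
    (fun j => mul_nonneg (abs_nonneg _) (hp0 j)) hu hG hGT)
  refine hmaj.of_nonneg_of_le (fun j => mul_nonneg (hf j) (hp0 j)) fun j => ?_
  calc f j * p j ≤ (C + |(j : ℝ) - μ| * ∑ i ∈ stepsFrom μ j, G i) * p j :=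
        mul_le_mul_of_nonneg_right (hle j) (hp0 j)
    _ = C * p j + |(j : ℝ) - μ| * p j * ∑ i ∈ stepsFrom μ j, G i := by ring

end cumul

theorem COf.hasSum_sub_mul {p q : ℤ → ℝ} {μ : ℝ} (h : COf p μ q) :
    HasSum (fun j : ℤ => (μ - j) * p j) 0 := by
  obtain ⟨⟨hp0, hp1⟩, hm, hμ, -⟩ := h
  have hjp : HasSum (fun j : ℤ => (j : ℝ) * p j) μ :=
    hμ ▸ (Summable.of_norm (hm.congr fun j => by
      rw [Real.norm_eq_abs, abs_mul, abs_of_nonneg (hp0 j)])).hasSum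
  simpa [sub_mul] using (hp1.mul_left μ).sub hjp

theorem abs_quad_le (δ β γ : ℝ) (j : ℤ) :
    |quad δ β γ j| ≤ (|δ| + |β| + |γ|) * (|(j : ℝ)| ^ 3 + 1) := by
  set t := |(j : ℝ)|
  have ht : 0 ≤ t := abs_nonneg _
  have ht2 : t ^ 2 ≤ t ^ 3 + 1 := by nlinarith [mul_nonneg ht (sq_nonneg (t - 1))]
  have ht1 : t ≤ t ^ 3 + 1 := by nlinarith [mul_nonneg ht (sq_nonneg (t - 1))]
  calc |quad δ β γ j| ≤ |δ| * t ^ 2 + |β| * t + |γ| := by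
        refine (abs_add_three _ _ _).trans_eq ?_
        rw [abs_mul, abs_mul, abs_pow]
    _ ≤ (|δ| + |β| + |γ|) * (t ^ 3 + 1) := by
        nlinarith [mul_le_mul_of_nonneg_left ht2 (abs_nonneg δ),
          mul_le_mul_of_nonneg_left ht1 (abs_nonneg β), abs_nonneg γ, pow_nonneg ht 3]

theorem summable_quad_mul {p : ℤ → ℝ} (hp0 : ∀ j, 0 ≤ p j) (hps : Summable p)
    (hmom : FinAbsMoment p 3) (δ β γ : ℝ) :
    Summable fun j => quad δ β γ j * p j := by
  refine Summable.of_norm_bounded ((hmom.add hps).mul_left (|δ| + |β| + |γ|)) fun j => ?_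
  rw [Real.norm_eq_abs, abs_mul, abs_of_nonneg (hp0 j)]
  calc |quad δ β γ j| * p j ≤ (|δ| + |β| + |γ|) * (|(j : ℝ)| ^ 3 + 1) * p j :=
        mul_le_mul_of_nonneg_right (abs_quad_le δ β γ j) (hp0 j)
    _ = _ := by ring

theorem COf.pmfI_one_mul_Ak {p q : ℤ → ℝ} {μ : ℝ} (h : COf p μ q)
    (hq : Summable fun j => q j * p j) (j : ℤ) :
    pmfI p q 1 j * Ak p q 1 = cumul p μ j := by
  have hQ : ∀ j, q j * p j = cumul p μ j := fun j => (h.2.2.2 j).symm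
  have hA : Ak p q 1 = ∑' j, q j * p j := by simp [Ak, Ex, ascPow]
  -- if `Ak p q 1 = 0` then `pmfI` is the junk value `0`, but so is every `q j * p j ≥ 0`
  rcases eq_or_ne (Ak p q 1) 0 with h0 | h0
  · have hsum0 : HasSum (fun j => q j * p j) 0 := by
      rw [← h0, hA]
      exact hq.hasSum
    have hQ0 : q j * p j = 0 := congrFun ((hasSum_zero_iff_of_nonneg fun j =>
      (hQ j).symm ▸ cumul_nonneg_s12 h.1.1 h.hasSum_sub_mul j).1 hsum0) j
    rw [h0, mul_zero, ← hQ, hQ0]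
  · rw [pmfI, div_mul_cancel₀ _ h0, ← hQ]
    simp [ascPow]

theorem stmt12_general (p : ℤ → ℝ) (μ δ β γ : ℝ) (h : CO p μ δ β γ)
    (hmom : FinAbsMoment p 3) (g : ℤ → ℝ) :
    (Summable (fun j : ℤ => (g (j + 1) - g j) ^ 2 * pmfI p (quad δ β γ) 1 j) →
      Summable (fun j : ℤ => g j ^ 2 * p j)) ∧
    (Summable (fun j : ℤ => |g (j + 1) - g j| * pmfI p (quad δ β γ) 1 j) →
      Summable (fun j : ℤ => |g j| * p j)) := by
  have hp0 := h.1.1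
  have hps := h.1.2.summable
  have hmean := COf.hasSum_sub_mul h
  have hQ := COf.pmfI_one_mul_Ak h (summable_quad_mul hp0 hps hmom δ β γ)
  have weight {G : ℤ → ℝ} (hG : Summable fun j => G j * pmfI p (quad δ β γ) 1 j) :
      Summable fun j => G j * cumul p μ j :=
    (hG.mul_right (Ak p (quad δ β γ) 1)).congr fun j => by rw [mul_assoc, hQ]
  refine ⟨fun hΔ => ?_, fun hΔ => ?_⟩
  · refine summable_mul_of_le_stepsFrom hp0 hmean hps _ (fun j => sq_nonneg _)
      (fun i => by positivity) (sq_le_stepsFrom g μ) ?_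
    simpa only [mul_assoc] using (weight hΔ).mul_left 2
  · exact summable_mul_of_le_stepsFrom hp0 hmean hps _ (fun j => abs_nonneg _)
      (fun i => abs_nonneg _) (abs_le_stepsFrom g μ) (weight hΔ)

theorem stmt12 (p : ℤ → ℝ) (μ δ β γ : ℝ) (h : CO p μ δ β γ)
    (hnc : ∃ j₁ ∈ supp p, ∃ j₂ ∈ supp p, j₁ ≠ j₂)
    (hmom : FinAbsMoment p 3) (g : ℤ → ℝ) :
    (Summable (fun j : ℤ => (g (j + 1) - g j) ^ 2 * pmfI p (quad δ β γ) 1 j) →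
      Summable (fun j : ℤ => g j ^ 2 * p j)) ∧
    (Summable (fun j : ℤ => |g (j + 1) - g j| * pmfI p (quad δ β γ) 1 j) →
      Summable (fun j : ℤ => |g j| * p j)) :=
  stmt12_general p μ δ β γ h hmom g
end
end
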